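/- Let p: ℝ → ℝ be continuous and 2π-periodic, a > 0 and σ ∈ ℝ. With α(ψ) := ∫₀^ψ dt/(a²cos²t + a⁻²sin²t) and p_{a,σ}(ψ) := p(α(ψ) + σ) · (a⁻²sin²ψ + a²cos²ψ)^{1/2}, one has ∫₀^{2π} p_{a,σ}(ψ) cos(2ψ) dψ = 𝓘₁(σ,a) and ∫₀^{2π} p_{a,σ}(ψ) sin(2ψ) dψ = 𝓘₂(σ,a). -/

import Mathlib

/-
Write `E(ψ) = a² cos² ψ + a⁻² sin² ψ`. Since `α' = 1/E`, both `(cos α, sin α)` and the unit vector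
along `(a cos ψ, a⁻¹ sin ψ)` solve `u' = (-u₂, u₁) / E` with the same value at `0`; their squared
distance then has zero derivative, so `cos α = a cos ψ / √E` and `sin α = sin ψ / (a √E)`. In particular `cos (α(ψ) - ψ) > 0` for all `ψ`, which traps `α(ψ) - ψ`
in `(-π/2, π/2)` and forces `α(2π) = 2π`. The substitution `α = α(ψ)` on `[0, 2π]` then turns
`𝓘₁`, `𝓘₂` into the Fourier integrals, because `a⁻² cos² α + a² sin² α = 1/E` while
`(a⁻² cos² α - a² sin² α, 2 sin α cos α) = (cos 2ψ, sin 2ψ) / E`.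
-/

open Real Set intervalIntegral

/-- The reparametrization angle α(ψ) induced by the map (x,y) ↦ (ax, y/a). -/
noncomputable def alphaFun (a ψ : ℝ) : ℝ :=
  ∫ t in (0:ℝ)..ψ, 1 / (a ^ 2 * Real.cos t ^ 2 + (a ^ 2)⁻¹ * Real.sin t ^ 2)

/-- The support function of the image of the domain with support function p under
the rotation by σ followed by (x,y) ↦ (ax, y/a). -/
noncomputable def suppTrans (p : ℝ → ℝ) (a σ ψ : ℝ) : ℝ :=
  p (alphaFun a ψ + σ) *
    Real.sqrt ((a ^ 2)⁻¹ * Real.sin ψ ^ 2 + a ^ 2 * Real.cos ψ ^ 2)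

/-- 𝓘₁(σ,a). -/
noncomputable def I1 (p : ℝ → ℝ) (σ a : ℝ) : ℝ :=
  ∫ α in (0:ℝ)..(2 * π), p (α + σ) *
    ((a ^ 2)⁻¹ * Real.cos α ^ 2 - a ^ 2 * Real.sin α ^ 2) *
    ((a ^ 2)⁻¹ * Real.cos α ^ 2 + a ^ 2 * Real.sin α ^ 2) ^ (-(5:ℝ) / 2)

/-- 𝓘₂(σ,a). -/
noncomputable def I2 (p : ℝ → ℝ) (σ a : ℝ) : ℝ :=
  ∫ α in (0:ℝ)..(2 * π), p (α + σ) *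
    (2 * Real.sin α * Real.cos α) *
    ((a ^ 2)⁻¹ * Real.cos α ^ 2 + a ^ 2 * Real.sin α ^ 2) ^ (-(5:ℝ) / 2)

theorem eq_cos_and_eq_sin_of_hasDerivAt {θ ω c s : ℝ → ℝ}
    (hθ : ∀ x, HasDerivAt θ (ω x) x) (hc : ∀ x, HasDerivAt c (-(ω x * s x)) x)
    (hs : ∀ x, HasDerivAt s (ω x * c x) x) {x₀ : ℝ} (hc₀ : cos (θ x₀) = c x₀)
    (hs₀ : sin (θ x₀) = s x₀) (x : ℝ) : cos (θ x) = c x ∧ sin (θ x) = s x := by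
  set G : ℝ → ℝ := fun y => (cos (θ y) - c y) ^ 2 + (sin (θ y) - s y) ^ 2
  have hG : ∀ y, HasDerivAt G 0 y := fun y => by
    refine (((((hθ y).cos).fun_sub (hc y)).fun_pow 2).fun_add
      ((((hθ y).sin).fun_sub (hs y)).fun_pow 2)).congr_deriv ?_
    norm_num
    ring
  have hGx : G x = 0 := by
    rw [is_const_of_deriv_eq_zero (fun y => (hG y).differentiableAt) (fun y => (hG y).deriv) x x₀]
    simp [G, hc₀, hs₀]
  have h := (add_eq_zero_iff_of_nonneg (sq_nonneg _) (sq_nonneg _)).1 hGx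
  exact ⟨sub_eq_zero.1 (pow_eq_zero_iff two_ne_zero |>.1 h.1),
    sub_eq_zero.1 (pow_eq_zero_iff two_ne_zero |>.1 h.2)⟩

theorem abs_lt_pi_div_two_of_cos_pos {f : ℝ → ℝ} (hf : Continuous f) {x₀ : ℝ}
    (h₀ : |f x₀| < π / 2) (hcos : ∀ x, 0 < cos (f x)) (x : ℝ) : |f x| < π / 2 := by
  by_contra! h
  obtain ⟨y, hy⟩ := intermediate_value_univ x₀ x (continuous_abs.comp hf) ⟨h₀.le, h⟩
  have := hcos y
  rw [← cos_abs, show |f y| = π / 2 from hy, cos_pi_div_two] at this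
  exact lt_irrefl 0 this

theorem cos_sq_add_sin_sq_pos {b c : ℝ} (hb : 0 < b) (hc : 0 < c) (x : ℝ) :
    0 < b * cos x ^ 2 + c * sin x ^ 2 := by
  nlinarith [sin_sq_add_cos_sq x, sq_nonneg (cos x), sq_nonneg (sin x), min_le_left b c,
    min_le_right b c, lt_min hb hc]

theorem rpow_neg_five_div_two_inv {x : ℝ} (hx : 0 ≤ x) : (x⁻¹) ^ (-(5 : ℝ) / 2) = x ^ 2 * √x := by
  rw [inv_rpow hx, ← rpow_neg hx, neg_div, neg_neg, sqrt_eq_rpow, ← rpow_natCast,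
    ← rpow_add' hx (by norm_num)]
  norm_num

/-- The squared length of `(a cos ψ, a⁻¹ sin ψ)`, whose polar angle is `alphaFun a ψ`. -/
noncomputable def ellipseNormSq (a ψ : ℝ) : ℝ := a ^ 2 * cos ψ ^ 2 + (a ^ 2)⁻¹ * sin ψ ^ 2

namespace ellipseNormSq

variable {a : ℝ}

theorem pos (ha : 0 < a) (ψ : ℝ) : 0 < ellipseNormSq a ψ :=
  cos_sq_add_sin_sq_pos (by positivity) (by positivity) ψ

theorem continuous_inv (ha : 0 < a) : Continuous fun ψ => (ellipseNormSq a ψ)⁻¹ :=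
  Continuous.inv₀ (by unfold ellipseNormSq; fun_prop) fun ψ => (pos ha ψ).ne'

theorem hasDerivAt_sqrt (ha : 0 < a) (ψ : ℝ) :
    HasDerivAt (fun ψ => √(ellipseNormSq a ψ))
      (((a ^ 2)⁻¹ - a ^ 2) * sin ψ * cos ψ / √(ellipseNormSq a ψ)) ψ := by
  have hE : HasDerivAt (ellipseNormSq a) (2 * ((a ^ 2)⁻¹ - a ^ 2) * sin ψ * cos ψ) ψ := by
    refine ((((hasDerivAt_cos ψ).fun_pow 2).const_mul _).fun_add
      (((hasDerivAt_sin ψ).fun_pow 2).const_mul _)).congr_deriv ?_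
    norm_num
    ring
  refine (hE.sqrt (pos ha ψ).ne').congr_deriv ?_
  field_simp

theorem hasDerivAt_mul_cos_div_sqrt (ha : 0 < a) (ψ : ℝ) :
    HasDerivAt (fun ψ => a * cos ψ / √(ellipseNormSq a ψ))
      (-((ellipseNormSq a ψ)⁻¹ * (sin ψ / (a * √(ellipseNormSq a ψ))))) ψ := by
  have hr0 := (sqrt_pos.2 (pos ha ψ)).ne'
  refine (((hasDerivAt_cos ψ).const_mul a).div (hasDerivAt_sqrt ha ψ) hr0).congr_deriv ?_
  have hr := sq_sqrt (pos ha ψ).le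
  set r := √(ellipseNormSq a ψ)
  rw [← hr]
  rw [ellipseNormSq] at hr
  field_simp at hr ⊢
  linear_combination (-sin ψ) * hr - sin ψ * sin_sq_add_cos_sq ψ

theorem hasDerivAt_sin_div_mul_sqrt (ha : 0 < a) (ψ : ℝ) :
    HasDerivAt (fun ψ => sin ψ / (a * √(ellipseNormSq a ψ)))
      ((ellipseNormSq a ψ)⁻¹ * (a * cos ψ / √(ellipseNormSq a ψ))) ψ := by
  have hr0 := (sqrt_pos.2 (pos ha ψ)).ne'
  refine ((hasDerivAt_sin ψ).div ((hasDerivAt_sqrt ha ψ).const_mul a)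
    (mul_ne_zero ha.ne' hr0)).congr_deriv ?_
  have hr := sq_sqrt (pos ha ψ).le
  set r := √(ellipseNormSq a ψ)
  rw [← hr]
  rw [ellipseNormSq] at hr
  field_simp at hr ⊢
  linear_combination cos ψ * hr + a ^ 4 * cos ψ * sin_sq_add_cos_sq ψ

end ellipseNormSq

open ellipseNormSq

theorem alphaFun_zero (a : ℝ) : alphaFun a 0 = 0 :=
  integral_same

section

variable {a : ℝ}

theorem hasDerivAt_alphaFun (ha : 0 < a) (ψ : ℝ) :
    HasDerivAt (alphaFun a) (ellipseNormSq a ψ)⁻¹ ψ := by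
  have h : alphaFun a = fun u => ∫ t in (0 : ℝ)..u, (ellipseNormSq a t)⁻¹ := by
    ext u
    simp only [alphaFun, ellipseNormSq, one_div]
  exact h ▸ ((continuous_inv ha).integral_hasStrictDerivAt 0 ψ).hasDerivAt

theorem continuous_alphaFun (ha : 0 < a) : Continuous (alphaFun a) :=
  continuous_iff_continuousAt.2 fun ψ => (hasDerivAt_alphaFun ha ψ).continuousAt

theorem cos_sin_alphaFun (ha : 0 < a) (ψ : ℝ) :
    cos (alphaFun a ψ) = a * cos ψ / √(ellipseNormSq a ψ) ∧
      sin (alphaFun a ψ) = sin ψ / (a * √(ellipseNormSq a ψ)) :=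
  eq_cos_and_eq_sin_of_hasDerivAt (hasDerivAt_alphaFun ha) (hasDerivAt_mul_cos_div_sqrt ha)
    (hasDerivAt_sin_div_mul_sqrt ha) (x₀ := 0)
    (by simp [alphaFun_zero, ellipseNormSq, ha.ne', sqrt_sq ha.le]) (by simp [alphaFun_zero]) ψ

theorem cos_alphaFun_sub_pos (ha : 0 < a) (ψ : ℝ) : 0 < cos (alphaFun a ψ - ψ) := by
  obtain ⟨hc, hs⟩ := cos_sin_alphaFun ha ψ
  have hr := sqrt_pos.2 (pos ha ψ)
  set r := √(ellipseNormSq a ψ)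
  have h : cos (alphaFun a ψ - ψ) = (a * cos ψ ^ 2 + a⁻¹ * sin ψ ^ 2) / r := by
    rw [cos_sub, hc, hs]
    field_simp
  exact h ▸ div_pos (cos_sq_add_sin_sq_pos ha (inv_pos.2 ha) ψ) hr

theorem alphaFun_two_pi (ha : 0 < a) : alphaFun a (2 * π) = 2 * π := by
  have hbound := abs_lt_pi_div_two_of_cos_pos (f := fun ψ => alphaFun a ψ - ψ)
    ((continuous_alphaFun ha).sub continuous_id) (x₀ := 0)
    (by simp [alphaFun_zero, pi_pos]) (cos_alphaFun_sub_pos ha) (2 * π)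
  rw [abs_lt] at hbound
  have hcos : cos (alphaFun a (2 * π) - 2 * π) = 1 := by
    rw [cos_sub_two_pi, (cos_sin_alphaFun ha _).1]
    simp [ellipseNormSq, sqrt_sq ha.le, ha.ne']
  have := (cos_eq_one_iff_of_lt_of_lt (by linarith [pi_pos]) (by linarith [pi_pos])).1 hcos
  linarith

theorem integral_comp_alphaFun (ha : 0 < a) {g : ℝ → ℝ} (hg : Continuous g) :
    ∫ α in (0 : ℝ)..(2 * π), g α =
      ∫ ψ in (0 : ℝ)..(2 * π), g (alphaFun a ψ) * (ellipseNormSq a ψ)⁻¹ := by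
  have h := integral_comp_mul_deriv (a := 0) (b := 2 * π) (fun ψ _ => hasDerivAt_alphaFun ha ψ)
    (continuous_inv ha).continuousOn hg
  rw [alphaFun_zero, alphaFun_two_pi ha] at h
  exact h.symm

theorem cos_sq_alphaFun (ha : 0 < a) (ψ : ℝ) :
    cos (alphaFun a ψ) ^ 2 = a ^ 2 * cos ψ ^ 2 / ellipseNormSq a ψ := by
  rw [(cos_sin_alphaFun ha ψ).1, div_pow, mul_pow, sq_sqrt (pos ha ψ).le]

theorem sin_sq_alphaFun (ha : 0 < a) (ψ : ℝ) :
    sin (alphaFun a ψ) ^ 2 = sin ψ ^ 2 / (a ^ 2 * ellipseNormSq a ψ) := by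
  rw [(cos_sin_alphaFun ha ψ).2, div_pow, mul_pow, sq_sqrt (pos ha ψ).le]

theorem sin_mul_cos_alphaFun (ha : 0 < a) (ψ : ℝ) :
    sin (alphaFun a ψ) * cos (alphaFun a ψ) = sin ψ * cos ψ / ellipseNormSq a ψ := by
  have hE := (pos ha ψ).ne'
  have hr := (sqrt_pos.2 (pos ha ψ)).ne'
  rw [(cos_sin_alphaFun ha ψ).1, (cos_sin_alphaFun ha ψ).2]
  field_simp
  rw [sq_sqrt (pos ha ψ).le]
  ring

theorem inv_sq_mul_cos_sq_add_sq_mul_sin_sq_alphaFun (ha : 0 < a) (ψ : ℝ) :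
    (a ^ 2)⁻¹ * cos (alphaFun a ψ) ^ 2 + a ^ 2 * sin (alphaFun a ψ) ^ 2 =
      (ellipseNormSq a ψ)⁻¹ := by
  have hE := (pos ha ψ).ne'
  rw [cos_sq_alphaFun ha, sin_sq_alphaFun ha]
  field_simp
  linear_combination sin_sq_add_cos_sq ψ

theorem inv_sq_mul_cos_sq_sub_sq_mul_sin_sq_alphaFun (ha : 0 < a) (ψ : ℝ) :
    ((a ^ 2)⁻¹ * cos (alphaFun a ψ) ^ 2 - a ^ 2 * sin (alphaFun a ψ) ^ 2) * ellipseNormSq a ψ =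
      cos (2 * ψ) := by
  have hE := (pos ha ψ).ne'
  rw [cos_sq_alphaFun ha, sin_sq_alphaFun ha, cos_two_mul']
  field_simp

theorem two_mul_sin_mul_cos_alphaFun (ha : 0 < a) (ψ : ℝ) :
    2 * sin (alphaFun a ψ) * cos (alphaFun a ψ) * ellipseNormSq a ψ = sin (2 * ψ) := by
  have hE := (pos ha ψ).ne'
  rw [mul_assoc 2, sin_mul_cos_alphaFun ha, sin_two_mul]
  field_simp

theorem suppTrans_eq (p : ℝ → ℝ) (a σ ψ : ℝ) :
    suppTrans p a σ ψ = p (alphaFun a ψ + σ) * √(ellipseNormSq a ψ) := by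
  rw [suppTrans, ellipseNormSq, add_comm (_ * sin ψ ^ 2)]

theorem integral_mul_rpow_eq_integral_suppTrans_mul {p : ℝ → ℝ} (hp : Continuous p) (ha : 0 < a)
    (σ : ℝ) {m w : ℝ → ℝ} (hm : Continuous m)
    (hmw : ∀ ψ, m (alphaFun a ψ) * ellipseNormSq a ψ = w ψ) :
    ∫ α in (0 : ℝ)..(2 * π), p (α + σ) * m α *
        ((a ^ 2)⁻¹ * cos α ^ 2 + a ^ 2 * sin α ^ 2) ^ (-(5 : ℝ) / 2) =
      ∫ ψ in (0 : ℝ)..(2 * π), suppTrans p a σ ψ * w ψ := by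
  have hq : ∀ α, 0 < (a ^ 2)⁻¹ * cos α ^ 2 + a ^ 2 * sin α ^ 2 :=
    cos_sq_add_sin_sq_pos (by positivity) (by positivity)
  have hg : Continuous fun α => p (α + σ) * m α *
      ((a ^ 2)⁻¹ * cos α ^ 2 + a ^ 2 * sin α ^ 2) ^ (-(5 : ℝ) / 2) :=
    ((hp.comp (continuous_add_const σ)).mul hm).mul
      ((by fun_prop : Continuous _).rpow_const fun α => .inl (hq α).ne')
  rw [integral_comp_alphaFun ha hg]
  refine integral_congr fun ψ _ => ?_
  simp only [inv_sq_mul_cos_sq_add_sq_mul_sin_sq_alphaFun ha,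
    rpow_neg_five_div_two_inv (pos ha ψ).le, suppTrans_eq, ← hmw ψ]
  field_simp

end

theorem second_Fourier_coefficients_eq_I1_I2
    (p : ℝ → ℝ) (hp : Continuous p)
    (a σ : ℝ) (ha : 0 < a) :
    (∫ ψ in (0:ℝ)..(2 * π), suppTrans p a σ ψ * Real.cos (2 * ψ)) = I1 p σ a ∧
    (∫ ψ in (0:ℝ)..(2 * π), suppTrans p a σ ψ * Real.sin (2 * ψ)) = I2 p σ a :=
  ⟨(integral_mul_rpow_eq_integral_suppTrans_mul hp ha σ (by fun_prop)
      (inv_sq_mul_cos_sq_sub_sq_mul_sin_sq_alphaFun ha)).symm,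
    (integral_mul_rpow_eq_integral_suppTrans_mul hp ha σ (by fun_prop)
      (two_mul_sin_mul_cos_alphaFun ha)).symm⟩
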